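/- For all k₁, k₂ ∈ ℝ and every positive diagonal 3×3 matrix D, the operator norm satisfies ‖D·K·D⁻¹‖₂ ≥ 1. -/

import Mathlib

/-!
Conjugation by `diagonal d` multiplies the `(i, j)` entry by `d i / d j`, so the product of the
`(0, 1)` and `(1, 0)` entries of `D K D⁻¹` is still `K 0 1 * K 1 0 = 1`. Since the operator norm
dominates every entry, `‖D K D⁻¹‖₂ ^ 2 ≥ 1`.
-/

/-- The operator norm of a `3 × 3` real matrix acting on Euclidean `ℝ³` (largest singular value). -/
noncomputable def opNorm2 (A : Matrix (Fin 3) (Fin 3) ℝ) : ℝ :=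
  ‖Matrix.toEuclideanCLM (𝕜 := ℝ) A‖

/-- The boundary coupling matrix `K`. -/
def Kmat (k₁ k₂ : ℝ) : Matrix (Fin 3) (Fin 3) ℝ :=
  !![-2 * k₁, 1, -k₂; 1, 0, 0; 1, 0, 0]

namespace Matrix

variable {n 𝕜 : Type*} [Fintype n] [DecidableEq n]

lemma norm_apply_le_norm_toEuclideanCLM [RCLike 𝕜] (A : Matrix n n 𝕜) (i j : n) :
    ‖A i j‖ ≤ ‖toEuclideanCLM (n := n) (𝕜 := 𝕜) A‖ := by
  set T := toEuclideanCLM (n := n) (𝕜 := 𝕜) A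
  calc ‖A i j‖ = ‖T (EuclideanSpace.single j 1) i‖ := by
        simp [T, ofLp_toEuclideanCLM, mulVec_single]
    _ ≤ ‖T (EuclideanSpace.single j 1)‖ := PiLp.norm_apply_le _ i
    _ ≤ ‖T‖ := by simpa using T.le_opNorm (EuclideanSpace.single j 1)

lemma one_le_norm_toEuclideanCLM_of_mul_apply_eq_one [RCLike 𝕜] (A : Matrix n n 𝕜) {i j : n}
    (h : A i j * A j i = 1) : 1 ≤ ‖toEuclideanCLM (n := n) (𝕜 := 𝕜) A‖ := by
  have hij := norm_apply_le_norm_toEuclideanCLM A i j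
  have hji := norm_apply_le_norm_toEuclideanCLM A j i
  have : 1 ≤ ‖toEuclideanCLM (n := n) (𝕜 := 𝕜) A‖ ^ 2 := by
    calc (1 : ℝ) = ‖A i j‖ * ‖A j i‖ := by rw [← norm_mul, h, norm_one]
      _ ≤ _ := by rw [sq]; gcongr
  exact one_le_sq_iff_one_le_abs _ |>.mp this |>.trans_eq (abs_norm _)

lemma inv_diagonal_of_ne_zero [Field 𝕜] {d : n → 𝕜} (hd : ∀ i, d i ≠ 0) :
    (diagonal d)⁻¹ = diagonal d⁻¹ :=
  inv_eq_right_inv <| by simp [diagonal_mul_diagonal, hd]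

lemma diagonal_mul_mul_inv_diagonal_apply [Field 𝕜] {d : n → 𝕜} (hd : ∀ i, d i ≠ 0)
    (A : Matrix n n 𝕜) (i j : n) :
    (diagonal d * A * (diagonal d)⁻¹) i j = d i * A i j / d j := by
  rw [inv_diagonal_of_ne_zero hd, mul_diagonal, diagonal_mul, Pi.inv_apply, div_eq_mul_inv]

lemma diagonal_conj_apply_mul_apply_symm [Field 𝕜] {d : n → 𝕜} (hd : ∀ i, d i ≠ 0)
    (A : Matrix n n 𝕜) (i j : n) :
    (diagonal d * A * (diagonal d)⁻¹) i j * (diagonal d * A * (diagonal d)⁻¹) j i =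
      A i j * A j i := by
  rw [diagonal_mul_mul_inv_diagonal_apply hd, diagonal_mul_mul_inv_diagonal_apply hd]
  field_simp [hd i, hd j]

end Matrix

open Matrix in
theorem stmt_6 (k₁ k₂ : ℝ) (D : Matrix (Fin 3) (Fin 3) ℝ)
    (hD : D.IsDiag) (hDpos : ∀ i, 0 < D i i) :
    1 ≤ opNorm2 (D * Kmat k₁ k₂ * D⁻¹) := by
  rw [← hD.diagonal_diag]
  refine one_le_norm_toEuclideanCLM_of_mul_apply_eq_one _ (i := 0) (j := 1) ?_
  rw [diagonal_conj_apply_mul_apply_symm (d := D.diag) fun i => (hDpos i).ne']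
  simp [Kmat]
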